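/- arXiv:1107.2188 — 2 statements merged into one kernel-verified Lean document; each statement's English description precedes it below -/
import Mathlib

section
/- If the weight system is decreasing, β := 2e(1−p) satisfies β < 1 (where e is Euler's number), and w(S)(ω) is defined as w(N)(ω) when h_N(ω) ≤ μ and 0 otherwise, then E[w(N)] ≤ E[w(S)] + ((μ+1−μβ)·β^μ/(1−β)²)·E[w(S)], where expectations are Lebesgue integrals with respect to ℙ and the real coefficient (μ+1−μβ)·β^μ/(1−β)² is coerced to ℝ≥0∞ via ENNReal.ofReal. -/
open MeasureTheory ENNReal
open scoped Classical

noncomputable section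

/-- The number of indices `t < n` with `ω t = true`. -/
def countTrue (ω : ℕ → Bool) (n : ℕ) : ℕ :=
  ((Finset.range n).filter fun t => ω t = true).card

/-- The least `T : ℕ` such that exactly `μ` of `ω 0, …, ω (T-1)` are `true`
(`∞` if no such `T` exists). -/
def tau (μ : ℕ) (ω : ℕ → Bool) : ℕ∞ :=
  sInf {T : ℕ∞ | ∃ n : ℕ, T = (n : ℕ∞) ∧ countTrue ω n = μ}

/-- `w(N)(ω) = Σ_{t < τ(ω), ω t = false} w t ω`. -/
def wOfN (μ : ℕ) (w : ℕ → (ℕ → Bool) → ℝ≥0∞) (ω : ℕ → Bool) : ℝ≥0∞ :=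
  ∑' t : ℕ, if (t : ℕ∞) < tau μ ω ∧ ω t = false then w t ω else 0

/-- `h_N(ω)`: the number of indices `t < τ(ω)` with `ω t = false` (as a value in `ℝ≥0∞`). -/
def hOfN (μ : ℕ) (ω : ℕ → Bool) : ℝ≥0∞ :=
  ∑' t : ℕ, if (t : ℕ∞) < tau μ ω ∧ ω t = false then (1 : ℝ≥0∞) else 0

/-- `w(S)(ω) = w(N)(ω)` if `h_N(ω) ≤ μ`, and `0` otherwise. -/
def wOfS (μ : ℕ) (w : ℕ → (ℕ → Bool) → ℝ≥0∞) (ω : ℕ → Bool) : ℝ≥0∞ :=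
  if hOfN μ ω ≤ (μ : ℝ≥0∞) then wOfN μ w ω else 0

/-- `P` is the law of an i.i.d. sequence of coin flips with head (`true`) probability `p`:
every finite cylinder set has the product Bernoulli probability. -/
def IsBernoulliProduct (p : ℝ) (P : Measure (ℕ → Bool)) : Prop :=
  ∀ (s : Finset ℕ) (b : ℕ → Bool),
    P {ω | ∀ i ∈ s, ω i = b i} =
      ∏ i ∈ s, (if b i then ENNReal.ofReal p else ENNReal.ofReal (1 - p))

/-!
Since `w` is decreasing and `w 0` depends on no coordinate, every weight is bounded by the
constant `c = w 0`, so on the event `h_N > μ` we have `w(N) ≤ c · h_N`, whence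
`w(N) ≤ w(S) + c · h_N · 1{h_N > μ}`. If `h_N > n`, then fewer than `μ` heads occur among the
first `μ + n` flips, which by a union bound over head patterns has probability at most
`2^(μ+n) q^(n+1)`, `q = 1 - p`. Summing these layers gives
`E[h_N · 1{h_N > μ}] ≤ q (4q)^μ (μ + 1/(1 - 2q))`, and `4q ≤ β p` (as `e > 5/2`) turns this into
the stated coefficient times `q p^μ`. Finally `E[w(S)] ≥ c q p^μ`: on the cylinder
`ω 0 = false`, `ω 1 = … = ω μ = true` we have `h_N = 1` and `w(S) ≥ w 0 ω = c`.
-/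

lemma ENNReal.le_tsum_ite_natCast_lt (x : ℝ≥0∞) :
    x ≤ ∑' j : ℕ, if (j : ℝ≥0∞) < x then 1 else 0 := by
  rcases eq_or_ne x ⊤ with rfl | hx
  · simp
  lift x to NNReal using hx with r
  calc (r : ℝ≥0∞) ≤ ⌈r⌉₊ := by exact_mod_cast Nat.le_ceil r
    _ = ∑ j ∈ Finset.range ⌈r⌉₊, if (j : ℝ≥0∞) < r then 1 else 0 := by
      rw [Finset.sum_congr rfl fun j hj => if_pos ?_]
      · simp
      · exact_mod_cast Nat.lt_ceil.1 (Finset.mem_range.1 hj)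
    _ ≤ _ := ENNReal.sum_le_tsum _

lemma ENNReal.tsum_pow_max (r : ℝ≥0∞) (m : ℕ) :
    ∑' j : ℕ, r ^ max j m = m * r ^ m + r ^ m * (1 - r)⁻¹ := by
  rw [← ENNReal.summable.sum_add_tsum_nat_add' (k := m)]
  congr 1
  · rw [Finset.sum_congr rfl fun j hj => by rw [max_eq_right (Finset.mem_range.1 hj).le]]
    simp
  · simp_rw [max_eq_left (Nat.le_add_left m _), pow_add, ENNReal.tsum_mul_right,
      ENNReal.tsum_geometric, mul_comm]

lemma four_mul_pow_mul_le (μ : ℕ) {q β : ℝ} (hq : 0 < q) (hβ : β = 2 * Real.exp 1 * q)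
    (hβ1 : β < 1) :
    (4 * q) ^ μ * (μ + (1 - 2 * q)⁻¹) ≤ (μ + 1 - μ * β) * β ^ μ / (1 - β) ^ 2 * (1 - q) ^ μ := by
  have he : 2.5 < Real.exp 1 := by have := Real.exp_one_gt_d9; linarith
  have hβ0 : 0 ≤ β := by rw [hβ]; positivity
  have h2q : 2 * q ≤ β := by rw [hβ]; nlinarith
  have h4q : 4 * q ≤ β * (1 - q) := by rw [hβ]; nlinarith
  have hinv : (1 - 2 * q)⁻¹ ≤ (1 - β)⁻¹ := inv_anti₀ (by linarith) (by linarith)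
  have hcoef : μ + (1 - β)⁻¹ ≤ (μ + 1 - μ * β) / (1 - β) ^ 2 := by
    have hsplit : (μ + 1 - μ * β) / (1 - β) ^ 2 =
        μ + (1 - β)⁻¹ + β * (μ * (1 - β) + 1) / (1 - β) ^ 2 := by
      field_simp [show 1 - β ≠ 0 by linarith]
      ring
    rw [hsplit, le_add_iff_nonneg_right]
    have : 0 ≤ (μ : ℝ) * (1 - β) := mul_nonneg μ.cast_nonneg (by linarith)
    positivity
  calc (4 * q) ^ μ * (μ + (1 - 2 * q)⁻¹)
      ≤ (β * (1 - q)) ^ μ * ((μ + 1 - μ * β) / (1 - β) ^ 2) :=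
        mul_le_mul (pow_le_pow_left₀ (by positivity) h4q μ) (by linarith)
          (add_nonneg μ.cast_nonneg (inv_nonneg.2 (by linarith)))
          (pow_nonneg (mul_nonneg hβ0 (by linarith)) μ)
    _ = (μ + 1 - μ * β) * β ^ μ / (1 - β) ^ 2 * (1 - q) ^ μ := by rw [mul_pow]; ring

lemma tsum_two_pow_mul_ofReal_pow_le (μ : ℕ) {q β : ℝ} (hq : 0 < q)
    (hβ : β = 2 * Real.exp 1 * q) (hβ1 : β < 1) :
    ∑' j : ℕ, 2 ^ (μ + max j μ) * ENNReal.ofReal q ^ (max j μ + 1) ≤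
      ENNReal.ofReal ((μ + 1 - μ * β) * β ^ μ / (1 - β) ^ 2) *
        (ENNReal.ofReal q * ENNReal.ofReal (1 - q) ^ μ) := by
  have h2q : 2 * q < 1 := by have := Real.exp_one_gt_d9; nlinarith
  have hβ0 : 0 ≤ β := by rw [hβ]; positivity
  have hsum : ∑' j : ℕ, 2 ^ (μ + max j μ) * ENNReal.ofReal q ^ (max j μ + 1) =
      ENNReal.ofReal (q * ((4 * q) ^ μ * (μ + (1 - 2 * q)⁻¹))) := by
    have hterm : ∀ j : ℕ, (2 : ℝ≥0∞) ^ (μ + max j μ) * ENNReal.ofReal q ^ (max j μ + 1) =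
        2 ^ μ * ENNReal.ofReal q * (2 * ENNReal.ofReal q) ^ max j μ := fun j => by ring
    rw [tsum_congr hterm, ENNReal.tsum_mul_left, ENNReal.tsum_pow_max,
      ENNReal.ofReal_mul hq.le, ENNReal.ofReal_mul (p := (4 * q) ^ μ) (by positivity),
      ENNReal.ofReal_add μ.cast_nonneg (inv_nonneg.2 (by linarith)),
      ENNReal.ofReal_inv_of_pos (by linarith), ENNReal.ofReal_sub _ (by positivity),
      ENNReal.ofReal_pow (by positivity), ENNReal.ofReal_mul (p := 4) (by norm_num),
      ENNReal.ofReal_mul (p := 2) (by norm_num), ENNReal.ofReal_one, ENNReal.ofReal_ofNat,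
      ENNReal.ofReal_ofNat, ENNReal.ofReal_natCast, show (4 : ℝ≥0∞) = 2 * 2 by norm_num]
    simp only [mul_pow]
    ring
  have hcoef : 0 ≤ (μ + 1 - μ * β) * β ^ μ / (1 - β) ^ 2 := by
    have : 0 ≤ (μ : ℝ) * (1 - β) := mul_nonneg μ.cast_nonneg (by linarith)
    exact div_nonneg (mul_nonneg (by linarith) (pow_nonneg hβ0 μ)) (sq_nonneg _)
  rw [hsum, ← ENNReal.ofReal_pow (by linarith), ← ENNReal.ofReal_mul hq.le,
    ← ENNReal.ofReal_mul hcoef]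
  refine ENNReal.ofReal_le_ofReal ?_
  have := mul_le_mul_of_nonneg_left (four_mul_pow_mul_le μ hq hβ hβ1) hq.le
  linarith

lemma countTrue_mono (ω : ℕ → Bool) : Monotone (countTrue ω) := fun _ _ h =>
  Finset.card_le_card (Finset.filter_subset_filter _ (Finset.range_subset_range.2 h))

lemma countTrue_succ (ω : ℕ → Bool) (n : ℕ) :
    countTrue ω (n + 1) = countTrue ω n + if ω n = true then 1 else 0 := by
  unfold countTrue
  rw [Finset.range_add_one, Finset.filter_insert]
  split_ifs <;> simp [Finset.card_insert_of_notMem]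

lemma exists_countTrue_eq_of_le {μ n : ℕ} {ω : ℕ → Bool} (h : μ ≤ countTrue ω n) :
    ∃ m ≤ n, countTrue ω m = μ := by
  induction n with
  | zero => exact ⟨0, le_rfl, by simp_all [countTrue]⟩
  | succ n ih =>
    by_cases hn : μ ≤ countTrue ω n
    · obtain ⟨m, hm, hμm⟩ := ih hn
      exact ⟨m, hm.trans n.le_succ, hμm⟩
    · refine ⟨n + 1, le_rfl, ?_⟩
      have := countTrue_succ ω n
      split_ifs at this <;> omega

lemma lt_tau_iff {μ t : ℕ} {ω : ℕ → Bool} : (t : ℕ∞) < tau μ ω ↔ countTrue ω t < μ := by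
  constructor
  · intro ht
    by_contra! hμ
    obtain ⟨m, hm, hμm⟩ := exists_countTrue_eq_of_le hμ
    have hτ : tau μ ω ≤ m := sInf_le ⟨m, rfl, hμm⟩
    exact ht.not_ge (hτ.trans (by exact_mod_cast hm))
  · intro ht
    refine ENat.natCast_add_one_le_iff.1 (le_sInf ?_)
    rintro _ ⟨n, rfl, hn⟩
    have : t < n := by
      by_contra! h
      exact (hn ▸ countTrue_mono ω h).not_gt ht
    exact_mod_cast this

lemma card_filter_false_add_countTrue (ω : ℕ → Bool) (m : ℕ) :
    ((Finset.range m).filter fun t => ω t = false).card + countTrue ω m = m := by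
  simp only [countTrue, ← Bool.not_eq_true]
  rw [add_comm, Finset.card_filter_add_card_filter_not, Finset.card_range]

lemma measurable_countTrue (m : ℕ) : Measurable fun ω : ℕ → Bool => countTrue ω m := by
  simp only [countTrue, Finset.card_filter]
  exact Finset.measurable_sum _ fun t _ =>
    (Measurable.of_discrete (f := fun b : Bool => if b = true then 1 else 0)).comp
      (measurable_pi_apply t)

lemma measurableSet_countTrue_lt (m μ : ℕ) : MeasurableSet {ω : ℕ → Bool | countTrue ω m < μ} :=
  measurable_countTrue m measurableSet_Iio

lemma hOfN_le_of_le_countTrue {μ n : ℕ} {ω : ℕ → Bool} (h : μ ≤ countTrue ω (μ + n)) :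
    hOfN μ ω ≤ n := by
  have hvanish : ∀ t ∉ Finset.range (μ + n),
      (if (t : ℕ∞) < tau μ ω ∧ ω t = false then (1 : ℝ≥0∞) else 0) = 0 := fun t ht =>
    if_neg fun hτ => (lt_tau_iff.1 hτ.1).not_ge
      (h.trans (countTrue_mono ω (by simpa using ht)))
  rw [hOfN, tsum_eq_sum hvanish, Finset.sum_boole, Nat.cast_le]
  calc ((Finset.range (μ + n)).filter fun t : ℕ => (t : ℕ∞) < tau μ ω ∧ ω t = false).card
        ≤ ((Finset.range (μ + n)).filter fun t => ω t = false).card :=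
        Finset.card_le_card (Finset.monotone_filter_right _ fun _ _ ht => ht.2)
    _ ≤ n := by have := card_filter_false_add_countTrue ω (μ + n); omega

lemma countTrue_lt_of_lt_hOfN {μ n : ℕ} {ω : ℕ → Bool} (h : (n : ℝ≥0∞) < hOfN μ ω) :
    countTrue ω (μ + n) < μ := by
  by_contra! hμ
  exact h.not_ge (hOfN_le_of_le_countTrue hμ)

lemma wOfN_le_mul_hOfN (μ : ℕ) {w : ℕ → (ℕ → Bool) → ℝ≥0∞} {ω : ℕ → Bool} {c : ℝ≥0∞}
    (hw : ∀ t, w t ω ≤ c) : wOfN μ w ω ≤ c * hOfN μ ω := by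
  rw [hOfN, ← ENNReal.tsum_mul_left]
  refine ENNReal.tsum_le_tsum fun t => ?_
  split_ifs
  · simpa using hw t
  · simp

/-- `∑ⱼ 1{h_N > max j μ}`, a bound for `h_N · 1{h_N > μ}`, with each event `h_N > n` enlarged to
the event of fewer than `μ` heads among the first `μ + n` flips. -/
def tailMajorant (μ : ℕ) (ω : ℕ → Bool) : ℝ≥0∞ :=
  ∑' j : ℕ, {ω' | countTrue ω' (μ + max j μ) < μ}.indicator 1 ω

lemma measurable_tailMajorant (μ : ℕ) : Measurable (tailMajorant μ) :=
  Measurable.tsum fun _ => measurable_one.indicator (measurableSet_countTrue_lt _ μ)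

lemma wOfN_le_wOfS_add_mul_tailMajorant {μ : ℕ} {w : ℕ → (ℕ → Bool) → ℝ≥0∞} {ω : ℕ → Bool}
    {c : ℝ≥0∞} (hw : ∀ t, w t ω ≤ c) :
    wOfN μ w ω ≤ wOfS μ w ω + c * tailMajorant μ ω := by
  rw [wOfS]
  split_ifs with hsmall
  · exact le_self_add
  rw [zero_add]
  refine (wOfN_le_mul_hOfN μ hw).trans (mul_le_mul_right ?_ c)
  refine (ENNReal.le_tsum_ite_natCast_lt _).trans (ENNReal.tsum_le_tsum fun j => ?_)
  split_ifs with hj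
  · have hmax : ((max j μ : ℕ) : ℝ≥0∞) < hOfN μ ω := by
      rw [Nat.mono_cast.map_max]
      exact max_lt hj (not_le.1 hsmall)
    simp [countTrue_lt_of_lt_hOfN hmax]
  · exact zero_le

lemma w_zero_le_wOfS {μ : ℕ} (hμ : 1 ≤ μ) (w : ℕ → (ℕ → Bool) → ℝ≥0∞) {ω : ℕ → Bool}
    (hω : ∀ i ∈ Finset.range (μ + 1), ω i = decide (i ≠ 0)) : w 0 ω ≤ wOfS μ w ω := by
  have hcount : μ ≤ countTrue ω (μ + 1) :=
    calc μ = (Finset.Ico 1 (μ + 1)).card := by simp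
      _ ≤ countTrue ω (μ + 1) := Finset.card_le_card fun i hi => by
        obtain ⟨h1, h2⟩ := Finset.mem_Ico.1 hi
        refine Finset.mem_filter.2 ⟨Finset.mem_range.2 h2, ?_⟩
        rw [hω i (Finset.mem_range.2 h2)]
        exact decide_eq_true (by omega)
  have hsmall : hOfN μ ω ≤ μ := (hOfN_le_of_le_countTrue hcount).trans (by exact_mod_cast hμ)
  have hτ : ((0 : ℕ) : ℕ∞) < tau μ ω := lt_tau_iff.2 (by simpa [countTrue] using Nat.lt_of_succ_le hμ)
  rw [wOfS, if_pos hsmall, wOfN]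
  refine le_trans ?_ (ENNReal.le_tsum 0)
  rw [if_pos ⟨hτ, by simpa using hω 0 (by simp)⟩]

namespace IsBernoulliProduct

variable {p : ℝ} {P : Measure (ℕ → Bool)}

lemma measure_cylinder_le (hP : IsBernoulliProduct p P) (hp1 : p ≤ 1) (s : Finset ℕ)
    (b : ℕ → Bool) :
    P {ω | ∀ i ∈ s, ω i = b i} ≤
      ENNReal.ofReal (1 - p) ^ (s.filter fun i => b i = false).card := by
  rw [hP, Finset.prod_ite]
  simp only [Bool.not_eq_true, Finset.prod_const]
  exact mul_le_of_le_one_left zero_le (pow_le_one₀ zero_le (ENNReal.ofReal_le_one.2 hp1))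

lemma measure_countTrue_lt_le (hP : IsBernoulliProduct p P) (hp0 : 0 ≤ p) (hp1 : p ≤ 1)
    (μ n : ℕ) :
    P {ω | countTrue ω (μ + n) < μ} ≤ 2 ^ (μ + n) * ENNReal.ofReal (1 - p) ^ (n + 1) := by
  set I := (Finset.range (μ + n)).powerset.filter fun s => s.card < μ
  have hcover : {ω | countTrue ω (μ + n) < μ} ⊆
      ⋃ s ∈ I, {ω | ∀ i ∈ Finset.range (μ + n), ω i = decide (i ∈ s)} := by
    intro ω hω
    refine Set.mem_biUnion (x := (Finset.range (μ + n)).filter fun t => ω t = true)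
      (Finset.mem_filter.2 ⟨Finset.mem_powerset.2 (Finset.filter_subset _ _), hω⟩)
      fun i hi => ?_
    cases hωi : ω i <;> simp [hi, hωi]
  have hcylinder : ∀ s ∈ I, P {ω | ∀ i ∈ Finset.range (μ + n), ω i = decide (i ∈ s)} ≤
      ENNReal.ofReal (1 - p) ^ (n + 1) := by
    intro s hs
    obtain ⟨hsub, hcard⟩ : s ⊆ Finset.range (μ + n) ∧ s.card < μ := by simpa [I] using hs
    refine (measure_cylinder_le hP hp1 _ _).trans
      (pow_le_pow_of_le_one zero_le (ENNReal.ofReal_le_one.2 (by linarith)) ?_)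
    have hfalse : ((Finset.range (μ + n)).filter fun i => decide (i ∈ s) = false) =
        Finset.range (μ + n) \ s := by
      ext i
      simp
    rw [hfalse, Finset.card_sdiff_of_subset hsub, Finset.card_range]
    omega
  calc P {ω | countTrue ω (μ + n) < μ}
      ≤ ∑ s ∈ I, P {ω | ∀ i ∈ Finset.range (μ + n), ω i = decide (i ∈ s)} :=
        (measure_mono hcover).trans (measure_biUnion_finset_le I _)
    _ ≤ I.card * ENNReal.ofReal (1 - p) ^ (n + 1) := by
        simpa using Finset.sum_le_sum hcylinder
    _ ≤ 2 ^ (μ + n) * ENNReal.ofReal (1 - p) ^ (n + 1) := by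
        gcongr
        calc (I.card : ℝ≥0∞) ≤ (Finset.range (μ + n)).powerset.card := by
              exact_mod_cast Finset.card_filter_le _ _
          _ = 2 ^ (μ + n) := by simp

lemma lintegral_tailMajorant_le (hP : IsBernoulliProduct p P) (hp0 : 0 ≤ p) (hp1 : p ≤ 1)
    (μ : ℕ) :
    ∫⁻ ω, tailMajorant μ ω ∂P ≤
      ∑' j : ℕ, 2 ^ (μ + max j μ) * ENNReal.ofReal (1 - p) ^ (max j μ + 1) := by
  unfold tailMajorant
  rw [lintegral_tsum fun j =>
    (measurable_one.indicator (measurableSet_countTrue_lt _ μ)).aemeasurable]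
  refine ENNReal.tsum_le_tsum fun j => ?_
  rw [lintegral_indicator_one (measurableSet_countTrue_lt _ μ)]
  exact hP.measure_countTrue_lt_le hp0 hp1 μ (max j μ)

lemma measure_cylinder_false_true (hP : IsBernoulliProduct p P) (μ : ℕ) :
    P {ω | ∀ i ∈ Finset.range (μ + 1), ω i = decide (i ≠ 0)} =
      ENNReal.ofReal p ^ μ * ENNReal.ofReal (1 - p) := by
  rw [hP, Finset.prod_range_succ']
  simp

lemma le_lintegral_wOfS (hP : IsBernoulliProduct p P) {μ : ℕ} (hμ : 1 ≤ μ)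
    {w : ℕ → (ℕ → Bool) → ℝ≥0∞} {c : ℝ≥0∞} (hw : ∀ ω, w 0 ω = c) :
    c * (ENNReal.ofReal p ^ μ * ENNReal.ofReal (1 - p)) ≤ ∫⁻ ω, wOfS μ w ω ∂P := by
  rw [← hP.measure_cylinder_false_true, ← lintegral_indicator_const (by measurability)]
  exact lintegral_mono (Set.indicator_le fun ω hω => hw ω ▸ w_zero_le_wOfS hμ w hω)

end IsBernoulliProduct

theorem expectation_wN_le_expectation_wS_general
    (p : ℝ) (hp0 : 0 < p) (hp1 : p < 1)
    (P : Measure (ℕ → Bool)) (hP : IsBernoulliProduct p P)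
    (μ : ℕ) (hμ : 1 ≤ μ)
    (w : ℕ → (ℕ → Bool) → ℝ≥0∞)
    (hdep : ∀ (t : ℕ) (ω ω' : ℕ → Bool), (∀ s < t, ω s = ω' s) → w t ω = w t ω')
    (hdec : ∀ (i j : ℕ) (ω : ℕ → Bool), i ≤ j → w j ω ≤ w i ω)
    (β : ℝ) (hβ : β = 2 * Real.exp 1 * (1 - p)) (hβ1 : β < 1) :
    ∫⁻ ω, wOfN μ w ω ∂P ≤
      ∫⁻ ω, wOfS μ w ω ∂P +
        ENNReal.ofReal (((μ : ℝ) + 1 - (μ : ℝ) * β) * β ^ μ / (1 - β) ^ 2) *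
          ∫⁻ ω, wOfS μ w ω ∂P := by
  set c := w 0 fun _ => true
  set K := ENNReal.ofReal (((μ : ℝ) + 1 - (μ : ℝ) * β) * β ^ μ / (1 - β) ^ 2)
  have hw0 : ∀ ω, w 0 ω = c := fun ω => hdep 0 ω _ fun _ h => absurd h (Nat.not_lt_zero _)
  have htail : ∫⁻ ω, tailMajorant μ ω ∂P ≤
      K * (ENNReal.ofReal (1 - p) * ENNReal.ofReal p ^ μ) := by
    have := (hP.lintegral_tailMajorant_le hp0.le hp1.le μ).trans
      (tsum_two_pow_mul_ofReal_pow_le μ (sub_pos.2 hp1) hβ hβ1)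
    rwa [sub_sub_cancel (1 : ℝ) p] at this
  calc ∫⁻ ω, wOfN μ w ω ∂P
      ≤ ∫⁻ ω, wOfS μ w ω + c * tailMajorant μ ω ∂P :=
        lintegral_mono fun ω => wOfN_le_wOfS_add_mul_tailMajorant fun t =>
          hw0 ω ▸ hdec 0 t ω t.zero_le
    _ = ∫⁻ ω, wOfS μ w ω ∂P + c * ∫⁻ ω, tailMajorant μ ω ∂P := by
        rw [lintegral_add_right _ ((measurable_tailMajorant μ).const_mul c),
          lintegral_const_mul c (measurable_tailMajorant μ)]
    _ ≤ ∫⁻ ω, wOfS μ w ω ∂P + c * (K * (ENNReal.ofReal (1 - p) * ENNReal.ofReal p ^ μ)) := by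
        gcongr
    _ = ∫⁻ ω, wOfS μ w ω ∂P + K * (c * (ENNReal.ofReal p ^ μ * ENNReal.ofReal (1 - p))) := by
        ring
    _ ≤ ∫⁻ ω, wOfS μ w ω ∂P + K * ∫⁻ ω, wOfS μ w ω ∂P := by
        grw [hP.le_lintegral_wOfS hμ hw0]

theorem expectation_wN_le_expectation_wS
    (p : ℝ) (hp0 : 0 < p) (hp1 : p < 1)
    (P : Measure (ℕ → Bool)) [IsProbabilityMeasure P] (hP : IsBernoulliProduct p P)
    (μ : ℕ) (hμ : 1 ≤ μ)
    (w : ℕ → (ℕ → Bool) → ℝ≥0∞)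
    (hmeas : ∀ t, Measurable (w t))
    (hdep : ∀ (t : ℕ) (ω ω' : ℕ → Bool), (∀ s < t, ω s = ω' s) → w t ω = w t ω')
    (hdec : ∀ (i j : ℕ) (ω : ℕ → Bool), i ≤ j → w j ω ≤ w i ω)
    (β : ℝ) (hβ : β = 2 * Real.exp 1 * (1 - p)) (hβ1 : β < 1) :
    ∫⁻ ω, wOfN μ w ω ∂P ≤
      ∫⁻ ω, wOfS μ w ω ∂P +
        ENNReal.ofReal (((μ : ℝ) + 1 - (μ : ℝ) * β) * β ^ μ / (1 - β) ^ 2) *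
          ∫⁻ ω, wOfS μ w ω ∂P :=
  expectation_wN_le_expectation_wS_general p hp0 hp1 P hP μ hμ w hdep hdec β hβ hβ1
end
end

section
/- For every real number p with 0 < p < 1 and (1−p)(1+p)² < 1, Σ_{n=1}^{∞} ℙ{ω : i_false(n)(ω) < i_true(n)(ω)} ≤ (1−p) / (1 − (1−p)(1+p)²), i.e., the sum over n ≥ 1 of the probabilities that the n-th head occurs after the n-th tail is at most (1−p)/(1−(1−p)(1+p)²). -/
open MeasureTheory ENNReal
open scoped Classical

noncomputable section

/-- The number of indices `t < n` with `ω t = b`. -/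
def countOf (b : Bool) (ω : ℕ → Bool) (n : ℕ) : ℕ :=
  ((Finset.range n).filter fun t => ω t = b).card

/-- `i_b(k)(ω)`: the least `T : ℕ` such that exactly `k` of `ω 0, …, ω (T-1)` equal `b`
(`∞` if no such `T` exists). -/
def idx (b : Bool) (k : ℕ) (ω : ℕ → Bool) : ℕ∞ :=
  sInf {T : ℕ∞ | ∃ n : ℕ, T = (n : ℕ∞) ∧ countOf b ω n = k}

/-!
If the `(n+1)`-st tail comes before the `(n+1)`-st head, it comes at some time `n + h + 1`
with `h ≤ n`, after exactly `h` heads among the first `n + h` flips. A union bound over these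
patterns gives `G_p(n+1, n+1) ≤ ∑_{h ≤ n} C(n+h, h) p^h (1-p)^(n+1)`, and
`C(n+h, h) ≤ C(2n, h)` with the binomial theorem bounds this by `(1-p) ((1-p)(1+p)²)^n`.
Summing the geometric series gives the claim.
-/

lemma countOf_zero (b : Bool) (ω : ℕ → Bool) : countOf b ω 0 = 0 := by
  simp [countOf]

lemma countOf_succ (b : Bool) (ω : ℕ → Bool) (n : ℕ) :
    countOf b ω (n + 1) = countOf b ω n + if ω n = b then 1 else 0 := by
  unfold countOf
  rw [Finset.range_add_one, Finset.filter_insert]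
  split
  · rw [Finset.card_insert_of_notMem (by simp)]
  · simp

lemma countOf_true_add_countOf_false (ω : ℕ → Bool) (n : ℕ) :
    countOf true ω n + countOf false ω n = n := by
  induction n with
  | zero => simp [countOf_zero]
  | succ m ih =>
    rw [countOf_succ, countOf_succ]
    cases ω m <;> simp <;> omega

lemma exists_le_countOf_eq {b : Bool} {ω : ℕ → Bool} {k m : ℕ} (hk : k ≤ countOf b ω m) :
    ∃ j ≤ m, countOf b ω j = k := by
  induction m with
  | zero => exact ⟨0, le_rfl, by rw [countOf_zero] at hk ⊢; omega⟩
  | succ m ih =>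
    by_cases h : k ≤ countOf b ω m
    · obtain ⟨j, hjm, hj⟩ := ih h
      exact ⟨j, hjm.trans m.le_succ, hj⟩
    · refine ⟨m + 1, le_rfl, ?_⟩
      rw [countOf_succ] at hk ⊢
      split_ifs at hk ⊢ <;> omega

lemma countOf_idx_of_ne_top {b : Bool} {k : ℕ} {ω : ℕ → Bool} (h : idx b k ω ≠ ⊤) :
    ∃ T : ℕ, idx b k ω = T ∧ countOf b ω T = k := by
  have hne : {T : ℕ∞ | ∃ n : ℕ, T = n ∧ countOf b ω n = k}.Nonempty :=
    Set.nonempty_iff_ne_empty.2 fun he => h (by rw [idx, he, sInf_empty])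
  obtain ⟨T, hT, hcount⟩ := csInf_mem hne
  exact ⟨T, hT, hcount⟩

lemma countOf_lt_of_lt_idx {b : Bool} {k : ℕ} {ω : ℕ → Bool} {m : ℕ}
    (h : (m : ℕ∞) < idx b k ω) : countOf b ω m < k := by
  by_contra! hk
  obtain ⟨j, hjm, hj⟩ := exists_le_countOf_eq hk
  have : idx b k ω ≤ j := sInf_le ⟨j, rfl, hj⟩
  exact absurd (h.trans_le this) (by exact_mod_cast hjm.not_gt)

def patternSet (m : ℕ) (S : Finset ℕ) : Set (ℕ → Bool) :=
  {ω | ∀ i ∈ Finset.range m, ω i = decide (i ∈ S)}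

lemma IsBernoulliProduct.measure_patternSet {p : ℝ} {P : Measure (ℕ → Bool)}
    (hP : IsBernoulliProduct p P) {m : ℕ} {S : Finset ℕ} (hS : S ⊆ Finset.range m) :
    P (patternSet m S) = ENNReal.ofReal p ^ S.card * ENNReal.ofReal (1 - p) ^ (m - S.card) := by
  have hfilter : (Finset.range m).filter (fun i => decide (i ∈ S) = true) = S := by
    simp only [decide_eq_true_eq]
    rw [Finset.filter_mem_eq_inter, Finset.inter_eq_right.2 hS]
  rw [patternSet, hP, Finset.prod_ite, Finset.prod_const, Finset.prod_const, Finset.filter_not,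
    hfilter, Finset.card_sdiff_of_subset hS, Finset.card_range]

lemma setOf_idx_false_lt_idx_true_subset (n : ℕ) :
    {ω | idx false (n + 1) ω < idx true (n + 1) ω} ⊆
      ⋃ h ∈ Finset.range (n + 1), ⋃ S ∈ (Finset.range (n + h)).powersetCard h,
        patternSet (n + h + 1) S := by
  intro ω (hω : idx false (n + 1) ω < idx true (n + 1) ω)
  obtain ⟨T₀, hidx, hcount⟩ := countOf_idx_of_ne_top hω.ne_top
  obtain ⟨T, rfl⟩ : ∃ T, T₀ = T + 1 := Nat.exists_eq_add_one.2 <| Nat.pos_of_ne_zero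
    fun h0 => by rw [h0, countOf_zero] at hcount; omega
  have hfalse_lt : countOf false ω T < n + 1 :=
    countOf_lt_of_lt_idx (by rw [hidx]; exact_mod_cast T.lt_succ_self)
  have htrue_lt : countOf true ω T < n + 1 :=
    countOf_lt_of_lt_idx <| lt_of_lt_of_le (by exact_mod_cast T.lt_succ_self) (hidx ▸ hω.le)
  have hωT : ω T = false := by
    by_contra hT
    rw [countOf_succ, if_neg hT] at hcount
    omega
  rw [countOf_succ, if_pos hωT] at hcount
  have hT : T = n + countOf true ω T := by
    have := countOf_true_add_countOf_false ω T
    omega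
  set S := (Finset.range T).filter fun t => ω t = true
  refine Set.mem_iUnion₂.2 ⟨S.card, Finset.mem_range.2 htrue_lt,
    Set.mem_iUnion₂.2 ⟨S, Finset.mem_powersetCard.2 ⟨?_, rfl⟩, ?_⟩⟩
  · exact hT ▸ Finset.filter_subset _ _
  · intro i hi
    rw [Finset.mem_range] at hi
    change i < n + countOf true ω T + 1 at hi
    rw [← hT, Nat.lt_succ_iff_lt_or_eq] at hi
    rcases hi with hi | rfl
    · cases hωi : ω i <;> simp [S, hi, hωi]
    · simp [S, hωT]

lemma sum_choose_add_mul_pow_le (n : ℕ) (x : ℝ≥0∞) :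
    ∑ h ∈ Finset.range (n + 1), ((n + h).choose h : ℝ≥0∞) * x ^ h ≤ (1 + x) ^ (2 * n) :=
  calc ∑ h ∈ Finset.range (n + 1), ((n + h).choose h : ℝ≥0∞) * x ^ h
      ≤ ∑ h ∈ Finset.range (2 * n + 1), ((2 * n).choose h : ℝ≥0∞) * x ^ h := by
        refine (Finset.sum_le_sum fun h hh => ?_).trans
          (Finset.sum_le_sum_of_subset (Finset.range_subset_range.2 (by omega)))
        have : (n + h).choose h ≤ (2 * n).choose h :=
          Nat.choose_le_choose h (by simp at hh; omega)
        gcongr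
    _ = (1 + x) ^ (2 * n) := by
        rw [add_comm 1 x, add_pow]
        simp [mul_comm]

lemma IsBernoulliProduct.measure_idx_false_lt_idx_true_le {p : ℝ} {P : Measure (ℕ → Bool)}
    (hP : IsBernoulliProduct p P) (n : ℕ) :
    P {ω | idx false (n + 1) ω < idx true (n + 1) ω} ≤
      ENNReal.ofReal (1 - p) ^ (n + 1) * (1 + ENNReal.ofReal p) ^ (2 * n) := by
  have hpattern : ∀ h, ∀ S ∈ (Finset.range (n + h)).powersetCard h,
      P (patternSet (n + h + 1) S) = ENNReal.ofReal p ^ h * ENNReal.ofReal (1 - p) ^ (n + 1) := by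
    intro h S hS
    obtain ⟨hSsub, hScard⟩ := Finset.mem_powersetCard.1 hS
    rw [hP.measure_patternSet (hSsub.trans (Finset.range_subset_range.2 (Nat.le_succ _))), hScard]
    congr 2
    omega
  calc P {ω | idx false (n + 1) ω < idx true (n + 1) ω}
      ≤ ∑ h ∈ Finset.range (n + 1), ∑ S ∈ (Finset.range (n + h)).powersetCard h,
          P (patternSet (n + h + 1) S) :=
        (measure_mono (setOf_idx_false_lt_idx_true_subset n)).trans <|
          (measure_biUnion_finset_le _ _).trans <|
            Finset.sum_le_sum fun _ _ => measure_biUnion_finset_le _ _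
    _ = ENNReal.ofReal (1 - p) ^ (n + 1) * ∑ h ∈ Finset.range (n + 1),
          ((n + h).choose h : ℝ≥0∞) * ENNReal.ofReal p ^ h := by
        rw [Finset.mul_sum]
        refine Finset.sum_congr rfl fun h _ => ?_
        rw [Finset.sum_congr rfl (hpattern h), Finset.sum_const, Finset.card_powersetCard,
          Finset.card_range, nsmul_eq_mul]
        ring
    _ ≤ _ := by gcongr; exact sum_choose_add_mul_pow_le n _

theorem sum_Gnn_le_general
    (p : ℝ) (hp0 : 0 < p) (hp1 : p < 1) (hr : (1 - p) * (1 + p) ^ 2 < 1)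
    (P : Measure (ℕ → Bool)) (hP : IsBernoulliProduct p P) :
    ∑' n : ℕ, P {ω | idx false (n + 1) ω < idx true (n + 1) ω} ≤
      ENNReal.ofReal ((1 - p) / (1 - (1 - p) * (1 + p) ^ 2)) := by
  set r := (1 - p) * (1 + p) ^ 2
  have hq : 0 ≤ 1 - p := by linarith
  have hratio : ENNReal.ofReal (1 - p) * (1 + ENNReal.ofReal p) ^ 2 = ENNReal.ofReal r := by
    rw [ENNReal.ofReal_mul hq, ENNReal.ofReal_pow (by linarith),
      ENNReal.ofReal_add zero_le_one hp0.le, ENNReal.ofReal_one]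
  calc ∑' n : ℕ, P {ω | idx false (n + 1) ω < idx true (n + 1) ω}
      ≤ ∑' n : ℕ, ENNReal.ofReal (1 - p) * ENNReal.ofReal r ^ n := by
        refine ENNReal.tsum_le_tsum fun n => (hP.measure_idx_false_lt_idx_true_le n).trans_eq ?_
        rw [← hratio, mul_pow, pow_mul, pow_succ']
        ring
    _ = ENNReal.ofReal (1 - p) * (1 - ENNReal.ofReal r)⁻¹ := by
        rw [ENNReal.tsum_mul_left, ENNReal.tsum_geometric]
    _ = ENNReal.ofReal ((1 - p) / (1 - r)) := by
        rw [← ENNReal.ofReal_one, ← ENNReal.ofReal_sub _ (by positivity),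
          ← ENNReal.ofReal_inv_of_pos (by linarith), ← ENNReal.ofReal_mul hq, div_eq_mul_inv]

/-- `Σ_{n ≥ 1} G_p(n,n) ≤ (1-p)/(1-(1-p)(1+p)²)`. -/
theorem sum_Gnn_le
    (p : ℝ) (hp0 : 0 < p) (hp1 : p < 1) (hr : (1 - p) * (1 + p) ^ 2 < 1)
    (P : Measure (ℕ → Bool)) [IsProbabilityMeasure P] (hP : IsBernoulliProduct p P) :
    ∑' n : ℕ, P {ω | idx false (n + 1) ω < idx true (n + 1) ω} ≤
      ENNReal.ofReal ((1 - p) / (1 - (1 - p) * (1 + p) ^ 2)) :=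
  sum_Gnn_le_general p hp0 hp1 hr P hP

end
end
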